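/- arXiv:2310.14128 — 3 statements merged into one kernel-verified Lean document; each statement's English description precedes it below -/
import Mathlib

section
/- Suppose e : ℝ → ℝ satisfies ė(t) = −l₀·e(t) + σ(t) with l₀ > 0, and |σ(t)| ≤ C + π(t) for all t ≥ 0 where C ≥ 0 and π(t) is a nonnegative exponentially decaying function. Then |e(t)| ≤ C/l₀ + π_e(t) for all t ≥ 0, where π_e is an exponentially decaying term depending on initial conditions; in particular limsup_{t→∞} |e(t)| ≤ C/l₀. -/
/-!
Multiplying by the integrating factor `exp (l₀ t)` shows that the scalar linear equation
`ẋ = -l₀ x + τ` preserves the order of solutions whose forcing terms are ordered. The function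
`C / l₀ + M exp (-ν t)` with `0 < ν < l₀` solves this equation with forcing
`C + (l₀ - ν) M exp (-ν t)`, which dominates `± σ` once `M ≥ K / (l₀ - ν)`, and starts above
`|e 0|` once `M ≥ K / (l₀ - ν) + |e 0|`. Comparing `e` and `-e` with it gives the bound with
rate `ν = min λ (l₀ / 2)`; the limsup bound follows since the exponential term tends to `0`.
-/

open Real Filter Set Topology

theorem le_of_hasDerivAt_neg_mul_add {f g τ ρ : ℝ → ℝ} {l a : ℝ}
    (hf : ∀ t ≥ a, HasDerivAt f (-l * f t + τ t) t)
    (hg : ∀ t ≥ a, HasDerivAt g (-l * g t + ρ t) t)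
    (hτρ : ∀ t ≥ a, τ t ≤ ρ t) (ha : f a ≤ g a) :
    ∀ t ≥ a, f t ≤ g t := by
  set h : ℝ → ℝ := fun t => exp (l * t) * (g t - f t)
  have hh : ∀ t ≥ a, HasDerivAt h (exp (l * t) * (ρ t - τ t)) t := by
    intro t ht
    have hexp : HasDerivAt (fun t => exp (l * t)) (exp (l * t) * l) t :=
      ((hasDerivAt_id t).const_mul l).exp.congr_deriv (by simp)
    exact (hexp.mul ((hg t ht).sub (hf t ht))).congr_deriv (by simp only [Pi.sub_apply]; ring)
  have hmono : MonotoneOn h (Ici a) := by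
    refine monotoneOn_of_hasDerivWithinAt_nonneg (convex_Ici a)
      (fun t ht => (hh t ht).continuousAt.continuousWithinAt)
      (fun t ht => (hh t (interior_subset ht)).hasDerivWithinAt) fun t ht => ?_
    have ht : a ≤ t := interior_subset ht
    exact mul_nonneg (exp_pos _).le (sub_nonneg.2 (hτρ t ht))
  intro t ht
  have hht : 0 ≤ h t :=
    (mul_nonneg (exp_pos _).le (sub_nonneg.2 ha)).trans (hmono self_mem_Ici ht ht)
  exact sub_nonneg.1 (nonneg_of_mul_nonneg_right hht (exp_pos _))

theorem hasDerivAt_const_div_add_mul_exp {l C M ν : ℝ} (hl : l ≠ 0) (t : ℝ) :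
    HasDerivAt (fun t => C / l + M * exp (-ν * t))
      (-l * (C / l + M * exp (-ν * t)) + (C + (l - ν) * M * exp (-ν * t))) t := by
  have hexp : HasDerivAt (fun t => exp (-ν * t)) (exp (-ν * t) * -ν) t :=
    ((hasDerivAt_id t).const_mul (-ν)).exp.congr_deriv (by simp)
  refine ((hexp.const_mul M).const_add (C / l)).congr_deriv ?_
  field_simp
  ring

theorem le_of_hasDerivAt_neg_mul_add_of_le_add_mul_exp {f τ : ℝ → ℝ} {l C K ν : ℝ}
    (hl : 0 < l) (hC : 0 ≤ C) (hK : 0 ≤ K) (hνl : ν < l)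
    (hf : ∀ t ≥ 0, HasDerivAt f (-l * f t + τ t) t)
    (hτ : ∀ t ≥ 0, τ t ≤ C + K * exp (-ν * t)) :
    ∀ t ≥ 0, f t ≤ C / l + (K / (l - ν) + |f 0|) * exp (-ν * t) := by
  have hlν : 0 < l - ν := sub_pos.2 hνl
  refine le_of_hasDerivAt_neg_mul_add hf (fun t _ => hasDerivAt_const_div_add_mul_exp hl.ne' t)
    (fun t ht => (hτ t ht).trans ?_) ?_
  · have hKM : K ≤ (l - ν) * (K / (l - ν) + |f 0|) := by
      rw [mul_add, mul_div_cancel₀ _ hlν.ne']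
      linarith [mul_nonneg hlν.le (abs_nonneg (f 0))]
    have := mul_le_mul_of_nonneg_right hKM (exp_pos (-ν * t)).le
    linarith
  · have hoffset : 0 ≤ C / l + K / (l - ν) := by positivity
    simp only [mul_zero, exp_zero, mul_one]
    linarith [le_abs_self (f 0)]

theorem abs_le_of_hasDerivAt_neg_mul_add_of_abs_le_add_mul_exp {f τ : ℝ → ℝ} {l C K ν : ℝ}
    (hl : 0 < l) (hC : 0 ≤ C) (hK : 0 ≤ K) (hνl : ν < l)
    (hf : ∀ t ≥ 0, HasDerivAt f (-l * f t + τ t) t)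
    (hτ : ∀ t ≥ 0, |τ t| ≤ C + K * exp (-ν * t)) :
    ∀ t ≥ 0, |f t| ≤ C / l + (K / (l - ν) + |f 0|) * exp (-ν * t) := by
  have hneg : ∀ t ≥ 0, HasDerivAt (fun t => -f t) (-l * (-f t) + -τ t) t :=
    fun t ht => (hf t ht).neg.congr_deriv (by ring)
  intro t ht
  have hup := le_of_hasDerivAt_neg_mul_add_of_le_add_mul_exp hl hC hK hνl hf
    (fun t ht => (le_abs_self _).trans (hτ t ht)) t ht
  have hdown := le_of_hasDerivAt_neg_mul_add_of_le_add_mul_exp hl hC hK hνl hneg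
    (fun t ht => (neg_le_abs _).trans (hτ t ht)) t ht
  rw [abs_neg] at hdown
  exact abs_le.2 ⟨by linarith, hup⟩

theorem limsup_abs_le_of_abs_le_add_mul_exp {f : ℝ → ℝ} {c M ν : ℝ} (hν : 0 < ν)
    (hf : ∀ t ≥ 0, |f t| ≤ c + M * exp (-ν * t)) :
    limsup (fun t => |f t|) atTop ≤ c := by
  have hexp : Tendsto (fun t => exp (-ν * t)) atTop (𝓝 0) :=
    tendsto_exp_atBot.comp (tendsto_id.const_mul_atTop_of_neg (neg_neg_iff_pos.2 hν))
  have hbound : Tendsto (fun t => c + M * exp (-ν * t)) atTop (𝓝 c) := by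
    simpa using (hexp.const_mul M).const_add c
  calc limsup (fun t => |f t|) atTop
      ≤ limsup (fun t => c + M * exp (-ν * t)) atTop :=
        limsup_le_limsup (eventually_atTop.2 ⟨0, hf⟩)
          (isCoboundedUnder_le_of_eventually_le atTop (Eventually.of_forall fun t => abs_nonneg _))
          hbound.isBoundedUnder_le
    _ = c := hbound.limsup_eq

/-- Error dynamics cascade step: if ė = −l₀e + σ and |σ| ≤ C + K e^{−λt},
then |e(t)| ≤ C/l₀ + exponentially decaying term, and
limsup_{t→∞} |e(t)| ≤ C/l₀. -/
theorem stmt_6 (e σ : ℝ → ℝ) (l₀ C K lam : ℝ)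
    (hl₀ : 0 < l₀) (hC : 0 ≤ C) (hK : 0 ≤ K) (hlam : 0 < lam)
    (hdyn : ∀ t ≥ 0, HasDerivAt e (-l₀ * e t + σ t) t)
    (hσ : ∀ t ≥ 0, |σ t| ≤ C + K * Real.exp (-lam * t)) :
    (∃ K' ≥ 0, ∃ lam' > 0, ∀ t ≥ 0,
        |e t| ≤ C / l₀ + K' * Real.exp (-lam' * t)) ∧
    Filter.limsup (fun t => |e t|) Filter.atTop ≤ C / l₀ := by
  set ν := min lam (l₀ / 2)
  have hν : 0 < ν := lt_min hlam (half_pos hl₀)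
  have hνl : ν < l₀ := (min_le_right _ _).trans_lt (half_lt_self hl₀)
  have hσν : ∀ t ≥ 0, |σ t| ≤ C + K * exp (-ν * t) := fun t ht =>
    (hσ t ht).trans <| add_le_add_right (mul_le_mul_of_nonneg_left
      (exp_le_exp.2 <| mul_le_mul_of_nonneg_right (neg_le_neg (min_le_left _ _)) ht) hK) C
  have hbound := abs_le_of_hasDerivAt_neg_mul_add_of_abs_le_add_mul_exp hl₀ hC hK hνl hdyn hσν
  have hM : 0 ≤ K / (l₀ - ν) + |e 0| := by
    have := sub_pos.2 hνl
    positivity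
  exact ⟨⟨_, hM, ν, hν, hbound⟩, limsup_abs_le_of_abs_le_add_mul_exp hν hbound⟩
end

section
/- Consider nonnegative continuously differentiable functions X₁, X₂ : [t_s, ∞) → ℝ satisfying Ẋ₁ ≤ −λ₁X₁ + (g₁/φ_b)X₂ + U₁ and Ẋ₂ ≤ −λ₂φ_b·X₂ + g₂X₁ + U₂, with constants λ₁, λ₂, g₁, g₂, φ_b > 0 and bounded nonnegative inputs U₁, U₂. If 4·(g₁/λ₁)·(g₂/λ₂) ≤ φ_b², then X₁ and X₂ remain uniformly bounded on [t_s, ∞). -/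
/-!
The weighted sum `V = X₁ + c X₂` with `c = λ₁ / (2 g₂)` is a Lyapunov function for the
interconnection: the small-gain condition is exactly what lets the decay terms absorb the cross
terms, leaving `V' ≤ -α V + (1 + c) M` with `α = min (λ₁, λ₂ φ_b) / 2`. By comparison with the
Grönwall bound, `V` never exceeds `max (V t_s) ((1 + c) M / α)`, and since both states are
nonnegative this bounds `X₁` and `X₂`.
-/

open Set Real

theorem gronwallBound_le_max_of_neg {δ K ε x : ℝ} (hK : K < 0) (hx : 0 ≤ x) :
    gronwallBound δ K ε x ≤ max δ (-ε / K) := by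
  have he₁ : exp (K * x) ≤ 1 := exp_le_one_iff.mpr (mul_nonpos_of_nonpos_of_nonneg hK.le hx)
  have hcomb : gronwallBound δ K ε x = exp (K * x) * δ + (1 - exp (K * x)) * (-ε / K) := by
    rw [gronwallBound_of_K_ne_0 hK.ne]
    ring
  rw [hcomb]
  calc exp (K * x) * δ + (1 - exp (K * x)) * (-ε / K)
      ≤ exp (K * x) * max δ (-ε / K) + (1 - exp (K * x)) * max δ (-ε / K) := by
        have : 0 ≤ 1 - exp (K * x) := by linarith
        gcongr
        exacts [le_max_left _ _, le_max_right _ _]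
    _ = max δ (-ε / K) := by ring

theorem le_max_of_hasDerivAt_le_neg_mul_add {f f' : ℝ → ℝ} {a α C : ℝ} (hα : 0 < α)
    (hf : ∀ t ≥ a, HasDerivAt f (f' t) t) (bound : ∀ t ≥ a, f' t ≤ -α * f t + C) :
    ∀ t ≥ a, f t ≤ max (f a) (C / α) := by
  intro t ht
  have hcont : ContinuousOn f (Icc a t) := fun s hs => (hf s hs.1).continuousAt.continuousWithinAt
  have hgronwall := le_gronwallBound_of_liminf_deriv_right_le hcont
    (fun s hs _ hr => (hf s hs.1).hasDerivWithinAt.liminf_right_slope_le hr) le_rfl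
    (fun s hs => bound s hs.1) t ⟨ht, le_rfl⟩
  calc f t ≤ _ := hgronwall
    _ ≤ max (f a) (-C / -α) := gronwallBound_le_max_of_neg (by linarith) (by linarith)
    _ = max (f a) (C / α) := by rw [neg_div_neg_eq]

theorem smallGain_combination_le {a₁ a₂ b₁ b₂ x₁ x₂ : ℝ} (ha₁ : 0 < a₁) (hb₂ : 0 < b₂)
    (hsg : 4 * b₁ * b₂ ≤ a₁ * a₂) (hx₁ : 0 ≤ x₁) (hx₂ : 0 ≤ x₂) :
    (-a₁ * x₁ + b₁ * x₂) + a₁ / (2 * b₂) * (-a₂ * x₂ + b₂ * x₁)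
      ≤ -min (a₁ / 2) (a₂ / 2) * (x₁ + a₁ / (2 * b₂) * x₂) := by
  set c := a₁ / (2 * b₂)
  set α := min (a₁ / 2) (a₂ / 2)
  have hc : 0 ≤ c := by positivity
  -- `c` is chosen so that the coupling `b₂ x₁` costs exactly half of the decay of `x₁`
  have hcb₂ : c * b₂ = a₁ / 2 := by simp only [c]; field_simp
  have hb₁ : b₁ ≤ c * a₂ / 2 := by
    rw [show c * a₂ / 2 = a₁ * a₂ / (4 * b₂) by simp only [c]; field_simp; ring,
      le_div_iff₀ (by positivity)]
    linarith
  have hα₁ : α ≤ a₁ / 2 := min_le_left _ _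
  have hα₂ : α * c ≤ a₂ / 2 * c := mul_le_mul_of_nonneg_right (min_le_right _ _) hc
  clear_value c α
  have h₁ : (α - a₁ / 2) * x₁ ≤ 0 := mul_nonpos_of_nonpos_of_nonneg (by linarith) hx₁
  have h₂ : (b₁ - c * a₂ + α * c) * x₂ ≤ 0 := mul_nonpos_of_nonpos_of_nonneg (by linarith) hx₂
  linear_combination h₁ + h₂ + x₁ * hcb₂

theorem exists_bound_of_smallGain {X₁ X₂ X₁' X₂' U₁ U₂ : ℝ → ℝ} {ts a₁ a₂ b₁ b₂ M : ℝ}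
    (ha₁ : 0 < a₁) (ha₂ : 0 < a₂) (hb₂ : 0 < b₂) (hsg : 4 * b₁ * b₂ ≤ a₁ * a₂)
    (hX₁ : ∀ t ≥ ts, 0 ≤ X₁ t) (hX₂ : ∀ t ≥ ts, 0 ≤ X₂ t)
    (hX₁' : ∀ t ≥ ts, HasDerivAt X₁ (X₁' t) t) (hX₂' : ∀ t ≥ ts, HasDerivAt X₂ (X₂' t) t)
    (hU₁ : ∀ t ≥ ts, U₁ t ≤ M) (hU₂ : ∀ t ≥ ts, U₂ t ≤ M)
    (h₁ : ∀ t ≥ ts, X₁' t ≤ -a₁ * X₁ t + b₁ * X₂ t + U₁ t)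
    (h₂ : ∀ t ≥ ts, X₂' t ≤ -a₂ * X₂ t + b₂ * X₁ t + U₂ t) :
    ∃ B : ℝ, ∀ t ≥ ts, X₁ t ≤ B ∧ X₂ t ≤ B := by
  set c := a₁ / (2 * b₂)
  set α := min (a₁ / 2) (a₂ / 2)
  have hc : 0 < c := by positivity
  have hα : 0 < α := lt_min (by positivity) (by positivity)
  have hV : ∀ t ≥ ts, HasDerivAt (fun s => X₁ s + c * X₂ s) (X₁' t + c * X₂' t) t :=
    fun t ht => (hX₁' t ht).add ((hX₂' t ht).const_mul c)
  have hV' : ∀ t ≥ ts, X₁' t + c * X₂' t ≤ -α * (X₁ t + c * X₂ t) + (1 + c) * M := by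
    intro t ht
    have hcomb := smallGain_combination_le ha₁ hb₂ hsg (hX₁ t ht) (hX₂ t ht)
    have hcX₂' := mul_le_mul_of_nonneg_left (h₂ t ht) hc.le
    have hcU₂ := mul_le_mul_of_nonneg_left (hU₂ t ht) hc.le
    linarith [h₁ t ht, hU₁ t ht]
  set K := max (X₁ ts + c * X₂ ts) ((1 + c) * M / α)
  have hVK := le_max_of_hasDerivAt_le_neg_mul_add hα hV hV'
  refine ⟨max K (K / c), fun t ht => ⟨?_, ?_⟩⟩
  · have hcX₂ := mul_nonneg hc.le (hX₂ t ht)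
    linarith [hVK t ht, le_max_left K (K / c)]
  · have hX₂K : X₂ t ≤ K / c := by
      rw [le_div_iff₀ hc]
      linarith [hVK t ht, hX₁ t ht]
    exact hX₂K.trans (le_max_right _ _)

theorem stmt_7_general (X₁ X₂ U₁ U₂ : ℝ → ℝ) (ts lam₁ lam₂ g₁ g₂ φb M : ℝ)
    (hlam₁ : 0 < lam₁) (hlam₂ : 0 < lam₂) (hg₂ : 0 < g₂)
    (hφb : 0 < φb)
    (hX₁nn : ∀ t ≥ ts, 0 ≤ X₁ t) (hX₂nn : ∀ t ≥ ts, 0 ≤ X₂ t)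
    (hX₁d : ∀ t ≥ ts, HasDerivAt X₁ (deriv X₁ t) t)
    (hX₂d : ∀ t ≥ ts, HasDerivAt X₂ (deriv X₂ t) t)
    (hU₁ : ∀ t ≥ ts, 0 ≤ U₁ t ∧ U₁ t ≤ M)
    (hU₂ : ∀ t ≥ ts, 0 ≤ U₂ t ∧ U₂ t ≤ M)
    (hineq₁ : ∀ t ≥ ts, deriv X₁ t ≤ -lam₁ * X₁ t + (g₁ / φb) * X₂ t + U₁ t)
    (hineq₂ : ∀ t ≥ ts, deriv X₂ t ≤ -lam₂ * φb * X₂ t + g₂ * X₁ t + U₂ t)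
    (hsg : 4 * (g₁ / lam₁) * (g₂ / lam₂) ≤ φb ^ 2) :
    ∃ B : ℝ, ∀ t ≥ ts, X₁ t ≤ B ∧ X₂ t ≤ B := by
  have hsg' : 4 * (g₁ / φb) * g₂ ≤ lam₁ * (lam₂ * φb) :=
    calc 4 * (g₁ / φb) * g₂ = lam₁ * lam₂ / φb * (4 * (g₁ / lam₁) * (g₂ / lam₂)) := by
          field_simp
      _ ≤ lam₁ * lam₂ / φb * φb ^ 2 := by gcongr
      _ = lam₁ * (lam₂ * φb) := by field_simp
  exact exists_bound_of_smallGain hlam₁ (by positivity) hg₂ hsg' hX₁nn hX₂nn hX₁d hX₂d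
    (fun t ht => (hU₁ t ht).2) (fun t ht => (hU₂ t ht).2) hineq₁
    (fun t ht => (hineq₂ t ht).trans_eq (by ring))

/-- Small-gain condition: two interconnected scalar comparison systems with
loop-gain condition 4(g₁/lam₁)(g₂/lam₂) ≤ φ_b² have uniformly bounded states. -/
theorem stmt_7 (X₁ X₂ U₁ U₂ : ℝ → ℝ) (ts lam₁ lam₂ g₁ g₂ φb M : ℝ)
    (hlam₁ : 0 < lam₁) (hlam₂ : 0 < lam₂) (hg₁ : 0 < g₁) (hg₂ : 0 < g₂)
    (hφb : 0 < φb)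
    (hX₁nn : ∀ t ≥ ts, 0 ≤ X₁ t) (hX₂nn : ∀ t ≥ ts, 0 ≤ X₂ t)
    (hX₁d : ∀ t ≥ ts, HasDerivAt X₁ (deriv X₁ t) t)
    (hX₂d : ∀ t ≥ ts, HasDerivAt X₂ (deriv X₂ t) t)
    (hU₁ : ∀ t ≥ ts, 0 ≤ U₁ t ∧ U₁ t ≤ M)
    (hU₂ : ∀ t ≥ ts, 0 ≤ U₂ t ∧ U₂ t ≤ M)
    (hineq₁ : ∀ t ≥ ts, deriv X₁ t ≤ -lam₁ * X₁ t + (g₁ / φb) * X₂ t + U₁ t)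
    (hineq₂ : ∀ t ≥ ts, deriv X₂ t ≤ -lam₂ * φb * X₂ t + g₂ * X₁ t + U₂ t)
    (hsg : 4 * (g₁ / lam₁) * (g₂ / lam₂) ≤ φb ^ 2) :
    ∃ B : ℝ, ∀ t ≥ ts, X₁ t ≤ B ∧ X₂ t ≤ B :=
  stmt_7_general X₁ X₂ U₁ U₂ ts lam₁ lam₂ g₁ g₂ φb M hlam₁ hlam₂ hg₂ hφb hX₁nn hX₂nn hX₁d hX₂d hU₁
    hU₂ hineq₁ hineq₂ hsg
end

section
/- Let φ̂₁(σ) = φ_aσ/(|σ|^{1/2}+δ) + φ_bσ and κ₁(σ,e) = (κ_a|σ| + κ_b|e| + κ_c)² + κ_d with all constants positive. If φ_b > l₀/ε and κ_a > κ_b/l₀ (for given l₀, ε > 0), then for all σ ≠ 0 and all e ∈ ℝ: (∂κ₁/∂e)(−l₀e + σ) + (2εκ₁ + γ)φ̂₁'(σ) > 0, where γ > 0. -/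
/-- Well-definedness (positivity) of the denominator in the DSSC dynamic
function τ_m under the parameter restrictions φ_b > l₀/ε, κ_a > κ_b/l₀. -/
theorem stmt_16 (φa φb δ κa κb κc κd l₀ ε γ : ℝ)
    (hφa : 0 < φa) (hφb : 0 < φb) (hδ : 0 < δ)
    (hκa : 0 < κa) (hκb : 0 < κb) (hκc : 0 < κc) (hκd : 0 < κd)
    (hl₀ : 0 < l₀) (hε : 0 < ε) (hγ : 0 < γ)
    (hφbl : φb > l₀ / ε) (hκal : κa > κb / l₀) :
    ∀ σ : ℝ, σ ≠ 0 → ∀ e : ℝ,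
      (2 * (κa * |σ| + κb * |e| + κc) * κb * Real.sign e) * (-l₀ * e + σ)
        + (2 * ε * ((κa * |σ| + κb * |e| + κc) ^ 2 + κd) + γ) *
          (φa * (Real.sqrt |σ| + 2 * δ) / (2 * (Real.sqrt |σ| + δ) ^ 2) + φb)
        > 0 := by
  intro σ hσ e
  have hs : 0 < |σ| := abs_pos.mpr hσ
  have hsq : 0 ≤ Real.sqrt |σ| := Real.sqrt_nonneg _
  have hF : 0 < φa * (Real.sqrt |σ| + 2 * δ) / (2 * (Real.sqrt |σ| + δ) ^ 2) := by
    positivity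
  have hA : 0 < κa * |σ| + κb * |e| + κc := by positivity
  have hεφb : l₀ < φb * ε := (div_lt_iff₀ hε).mp hφbl
  have hκ : κb < κa * l₀ := (div_lt_iff₀ hl₀).mp hκal
  have habs1 : σ ≤ |σ| := le_abs_self σ
  have habs2 : -|σ| ≤ σ := neg_abs_le σ
  have hpos2 : 0 < 2 * ε * ((κa * |σ| + κb * |e| + κc) ^ 2 + κd) + γ := by positivity
  have hFterm := mul_pos hpos2 hF
  generalize hFg : φa * (Real.sqrt |σ| + 2 * δ) / (2 * (Real.sqrt |σ| + δ) ^ 2) = F at hF hFterm ⊢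
  rcases lt_trichotomy e 0 with he | he | he
  · rw [Real.sign_of_neg he, abs_of_neg he]
    rw [abs_of_neg he] at hA hFterm hpos2
    nlinarith [mul_pos (by linarith : (0:ℝ) < φb * ε - l₀)
        (mul_pos hA hA),
      mul_pos (mul_pos (by linarith : (0:ℝ) < κa * l₀ - κb) hs) hA,
      mul_pos (mul_pos hl₀ hκc) hA, hFterm,
      mul_nonneg (mul_nonneg (by linarith : (0:ℝ) ≤ 2 * (κa * |σ| + κb * (-e) + κc)) hκb.le)
        (by linarith : (0:ℝ) ≤ |σ| - σ)]
  · subst he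
    simp only [Real.sign_zero, mul_zero, zero_mul, zero_add]
    positivity
  · rw [Real.sign_of_pos he, abs_of_pos he]
    rw [abs_of_pos he] at hA hFterm hpos2
    nlinarith [mul_pos (by linarith : (0:ℝ) < φb * ε - l₀)
        (mul_pos hA hA),
      mul_pos (mul_pos (by linarith : (0:ℝ) < κa * l₀ - κb) hs) hA,
      mul_pos (mul_pos hl₀ hκc) hA, hFterm,
      mul_nonneg (mul_nonneg (by linarith : (0:ℝ) ≤ 2 * (κa * |σ| + κb * e + κc)) hκb.le)
        (by linarith : (0:ℝ) ≤ σ + |σ|)]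
end
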